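/- Let τ ∈ (0,1) and let ℱ contain only distributions with finite first moments supported on an interval 𝒴 ⊆ ℝ. Suppose Φ: 𝒴² → ℝ is strictly convex with gradient ∇Φ, g: 𝒴 → ℝ, and for all (e⁻,e⁺) ∈ 𝒴² the function v ↦ g(v) + (1/τ)∂₁Φ(e⁻,e⁺)v − (1/(1−τ))∂₂Φ(e⁻,e⁺)v is strictly increasing, with E[|g(Y)|] < ∞ and E[|Φ(Y,Y)|] < ∞ for all Y ~ F ∈ ℱ. Then the scoring function L(y;e⁻,v,e⁺) = (g(y)−g(v))(τ−𝟙{y≤v}) + ⟨∇Φ(e⁻,e⁺), (e⁻ + (1/τ)S⁻_τ(y;v), e⁺ − (1/(1−τ))S⁺_τ(y;v))⟩ − Φ(e⁻,e⁺) + Φ(y,y) is strictly ℱ-consistent for the composite triplet (ES⁻_τ, q_τ, ES⁺_τ): for all Y ~ F ∈ ℱ, the expected score E[L(Y; e⁻,v,e⁺)] is minimized exactly at e⁻ = ES⁻_τ(F), v ∈ q_τ(F), e⁺ = ES⁺_τ(F). -/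

import Mathlib

/-!
Put `G = g + (Φ₁/τ − Φ₂/(1−τ))·id`, the partial derivatives taken at `(e⁻, e⁺)`. Then the score is
the generalized pinball loss `(G y − G v)(τ − 𝟙{y ≤ v})` plus
`Φ₁ (e⁻ − y) + Φ₂ (e⁺ − y) − Φ(e⁻, e⁺) + Φ(y, y)`. Since `G` is strictly increasing on `𝒴`, the
expected pinball loss is minimal exactly on the `τ`-quantiles. Via the quantile transform
`Y = F⁻¹(U)`, at a quantile `v` one gets `E[(Y − v)(τ − 𝟙{Y ≤ v})] = τ(1−τ)(ES⁺ − ES⁻)` and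
`E[Y] = τ ES⁻ + (1−τ) ES⁺`. The expected score at `v` is therefore
`Φ₁ (e⁻ − ES⁻) + Φ₂ (e⁺ − ES⁺) − Φ(e⁻, e⁺)` up to terms not depending on `(e⁻, e⁺)`, and by
strict convexity of `Φ` this is minimal exactly at `(ES⁻, ES⁺)`.
-/

open MeasureTheory

noncomputable def Sminus (τ y a : ℝ) : ℝ :=
  ((if y ≤ a then (1:ℝ) else 0) - τ) * a - (if y ≤ a then (1:ℝ) else 0) * y

noncomputable def Splus (τ y a : ℝ) : ℝ :=
  (1 - τ - (if a < y then (1:ℝ) else 0)) * a + (if a < y then (1:ℝ) else 0) * y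

noncomputable def genInv (μ : Measure ℝ) (p : ℝ) : ℝ :=
  sInf {x : ℝ | p ≤ (μ (Set.Iic x)).toReal}

noncomputable def ESminus (μ : Measure ℝ) (τ : ℝ) : ℝ :=
  (1 / τ) * ∫ p in Set.Ioc (0:ℝ) τ, genInv μ p

noncomputable def ESplus (μ : Measure ℝ) (τ : ℝ) : ℝ :=
  (1 / (1 - τ)) * ∫ p in Set.Ioc τ (1:ℝ), genInv μ p

def quantileSet (μ : Measure ℝ) (τ : ℝ) : Set ℝ :=
  {t | (μ (Set.Iio t)).toReal ≤ τ ∧ τ ≤ (μ (Set.Iic t)).toReal}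

/-- The scoring function for the composite triplet (ES⁻_τ, q_τ, ES⁺_τ). -/
noncomputable def compositeScore (g : ℝ → ℝ) (Φ Φ₁ Φ₂ : ℝ → ℝ → ℝ) (τ y em v ep : ℝ) : ℝ :=
  (g y - g v) * (τ - if y ≤ v then 1 else 0)
    + Φ₁ em ep * (em + (1/τ) * Sminus τ y v)
    + Φ₂ em ep * (ep - (1/(1-τ)) * Splus τ y v)
    - Φ em ep + Φ y y

open Set Filter ProbabilityTheory

open scoped ENNReal in
theorem Set.OrdConnected.setAverage_mem {α : Type*} [MeasurableSpace α] {μ : Measure α}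
    {s : Set ℝ} {t : Set α} {f : α → ℝ} (hs : s.OrdConnected) (h0 : μ t ≠ 0) (hfin : μ t ≠ ∞)
    (hf : IntegrableOn f t μ) (hfs : ∀ᵐ x ∂μ.restrict t, f x ∈ s) : ⨍ x in t, f x ∂μ ∈ s := by
  have : IsFiniteMeasure (μ.restrict t) := isFiniteMeasure_restrict.2 hfin
  have hne : μ.restrict t ≠ 0 := by simpa using h0
  have hN : μ.restrict t {x | f x ∉ s} = 0 := hfs
  obtain ⟨a, ha, hale⟩ := exists_notMem_null_le_average hne hf hN
  obtain ⟨b, hb, hbge⟩ := exists_notMem_null_average_le hne hf hN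
  exact hs.out (not_not.1 ha) (not_not.1 hb) ⟨hale, hbge⟩

theorem measure_eq_zero_of_setIntegral_eq_zero {α : Type*} [MeasurableSpace α] {μ : Measure α}
    {s t : Set α} {f : α → ℝ} (hts : t ⊆ s) (hf : IntegrableOn f s μ)
    (hnn : 0 ≤ᵐ[μ.restrict s] f) (hpos : ∀ᵐ x ∂μ.restrict t, 0 < f x)
    (h : ∫ x in s, f x ∂μ = 0) : μ t = 0 := by
  have hzero := ae_restrict_of_ae_restrict_of_subset hts
    ((integral_eq_zero_iff_of_nonneg_ae hnn hf).1 h)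
  have hfalse : ∀ᵐ x ∂μ.restrict t, False := by
    filter_upwards [hpos, hzero] with x hx hx0
    exact hx.ne' hx0
  rwa [eventually_false_iff_eq_bot, ae_eq_bot, Measure.restrict_eq_zero] at hfalse

section QuantileTransform

variable {μ : Measure ℝ} [IsProbabilityMeasure μ] {p : ℝ}

theorem genInv_eq_sInf_cdf (p : ℝ) : genInv μ p = sInf {x | p ≤ cdf μ x} := by
  simp_rw [cdf_eq_real]
  rfl

theorem genInv_le_iff (hp : p ∈ Ioo 0 1) (x : ℝ) : genInv μ p ≤ x ↔ p ≤ μ.real (Iic x) := by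
  have hbdd : BddBelow {x | p ≤ cdf μ x} := by
    obtain ⟨b, hb⟩ := ((tendsto_cdf_atBot μ).eventually (gt_mem_nhds hp.1)).exists_forall_of_atBot
    exact ⟨b, fun y hy => le_of_not_gt fun hyb => (hb y hyb.le).not_ge hy⟩
  have hne : {x | p ≤ cdf μ x}.Nonempty :=
    (((tendsto_cdf_atTop μ).eventually (lt_mem_nhds hp.2)).exists).imp fun _ => le_of_lt
  rw [genInv_eq_sInf_cdf, ← cdf_eq_real]
  refine ⟨fun h => ?_, fun h => csInf_le hbdd h⟩
  refine ge_of_tendsto (((cdf μ).right_continuous x).mono Ioi_subset_Ici_self) ?_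
  filter_upwards [self_mem_nhdsWithin] with z hz
  obtain ⟨y, hy, hyz⟩ := exists_lt_of_csInf_lt hne (h.trans_lt hz)
  exact hy.trans (monotone_cdf μ hyz.le)

theorem monotoneOn_genInv : MonotoneOn (genInv μ) (Ioo 0 1) := fun _ ha _ hb hab =>
  (genInv_le_iff ha _).2 (hab.trans ((genInv_le_iff hb _).1 le_rfl))

theorem aemeasurable_genInv : AEMeasurable (genInv μ) (volume.restrict (Ioo 0 1)) :=
  aemeasurable_restrict_of_monotoneOn measurableSet_Ioo monotoneOn_genInv

theorem map_genInv : (volume.restrict (Ioo 0 1)).map (genInv μ) = μ := by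
  refine (Measure.ext_of_Iic μ _ fun x => ?_).symm
  have hpre : genInv μ ⁻¹' Iic x ∩ Ioo 0 1 = Ioo 0 1 ∩ Iic (cdf μ x) := by
    ext p
    simp only [mem_inter_iff, mem_preimage, mem_Iic, cdf_eq_real]
    exact ⟨fun h => ⟨h.2, (genInv_le_iff h.2 x).1 h.1⟩, fun h => ⟨(genInv_le_iff h.1 x).2 h.2, h.1⟩⟩
  rw [Measure.map_apply_of_aemeasurable aemeasurable_genInv measurableSet_Iic,
    Measure.restrict_apply' measurableSet_Ioo, hpre,
    measure_congr (Ioo_ae_eq_Ioc.inter (ae_eq_refl (Iic (cdf μ x)))), Ioc_inter_Iic,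
    Real.volume_Ioc, min_eq_right (cdf_le_one μ x), sub_zero, ofReal_cdf]

theorem ae_genInv_mem {s : Set ℝ} (hs : ∀ᵐ y ∂μ, y ∈ s) :
    ∀ᵐ p ∂volume.restrict (Ioo 0 1), genInv μ p ∈ s := by
  rw [← map_genInv (μ := μ)] at hs
  exact ae_of_ae_map aemeasurable_genInv hs

variable {E : Type*} [NormedAddCommGroup E] {f : ℝ → E}

theorem integrableOn_comp_genInv (hf : Integrable f μ) :
    IntegrableOn (fun p => f (genInv μ p)) (Ioo 0 1) := by
  rw [← map_genInv (μ := μ)] at hf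
  exact hf.comp_aemeasurable aemeasurable_genInv

theorem integral_comp_genInv [NormedSpace ℝ E] (hf : AEStronglyMeasurable f μ) :
    ∫ p in Ioo 0 1, f (genInv μ p) = ∫ y, f y ∂μ := by
  have h := integral_map aemeasurable_genInv (map_genInv (μ := μ) ▸ hf)
  rw [map_genInv] at h
  exact h.symm

/-- The second piece is over `Ioo τ 1` because `genInv μ 1` can be a junk value. -/
theorem integral_eq_setIntegral_add_setIntegral_genInv [NormedSpace ℝ E] {τ : ℝ}
    (hτ : τ ∈ Ioo 0 1) (hf : Integrable f μ) :
    ∫ y, f y ∂μ = (∫ p in Ioc 0 τ, f (genInv μ p)) + ∫ p in Ioo τ 1, f (genInv μ p) := by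
  have hfi := integrableOn_comp_genInv hf
  rw [← integral_comp_genInv hf.1, ← Ioc_union_Ioo_eq_Ioo hτ.1.le hτ.2,
    setIntegral_union (Ioc_disjoint_Ioi_same.mono_right Ioo_subset_Ioi_self) measurableSet_Ioo
      (hfi.mono_set (Ioc_subset_Ioo_right hτ.2)) (hfi.mono_set (Ioo_subset_Ioo_left hτ.1.le))]

end QuantileTransform

section ExpectedShortfall

variable {μ : Measure ℝ} [IsProbabilityMeasure μ] {τ v : ℝ} {𝒴 : Set ℝ}

theorem genInv_le_of_mem_quantileSet (hv : v ∈ quantileSet μ τ) (hτ : τ < 1) {p : ℝ}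
    (hp : p ∈ Ioc 0 τ) : genInv μ p ≤ v :=
  (genInv_le_iff ⟨hp.1, hp.2.trans_lt hτ⟩ v).2 (hp.2.trans hv.2)

theorem le_genInv_of_mem_quantileSet (hv : v ∈ quantileSet μ τ) (hτ : 0 < τ) {p : ℝ}
    (hp : p ∈ Ioo τ 1) : v ≤ genInv μ p := by
  by_contra! h
  have h₁ : p ≤ μ.real (Iic (genInv μ p)) := (genInv_le_iff ⟨hτ.trans hp.1, hp.2⟩ _).1 le_rfl
  have h₂ : μ.real (Iic (genInv μ p)) ≤ μ.real (Iio v) := measureReal_mono (Iic_subset_Iio.2 h)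
  have h₃ : μ.real (Iio v) ≤ τ := hv.1
  linarith [hp.1]

theorem mem_of_mem_quantileSet (h𝒴 : 𝒴.OrdConnected) (hsupp : ∀ᵐ y ∂μ, y ∈ 𝒴)
    (hτ : τ ∈ Ioo 0 1) (hv : v ∈ quantileSet μ τ) : v ∈ 𝒴 := by
  have hle : μ (Iic v) ≠ 0 := fun h => by
    have h₁ : τ ≤ (μ (Iic v)).toReal := hv.2
    simp only [h, ENNReal.toReal_zero] at h₁
    linarith [hτ.1]
  have hge : μ (Ici v) ≠ 0 := fun h => by
    have h₁ : (μ (Iio v)).toReal ≤ τ := hv.1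
    rw [← compl_Ici, prob_compl_eq_one_sub measurableSet_Ici, h, tsub_zero,
      ENNReal.toReal_one] at h₁
    linarith [hτ.2]
  obtain ⟨a, ha, ha𝒴⟩ := Measure.exists_mem_of_measure_ne_zero_of_ae hle (ae_restrict_of_ae hsupp)
  obtain ⟨b, hb, hb𝒴⟩ := Measure.exists_mem_of_measure_ne_zero_of_ae hge (ae_restrict_of_ae hsupp)
  exact h𝒴.out ha𝒴 hb𝒴 ⟨ha, hb⟩

omit [IsProbabilityMeasure μ] in
theorem setIntegral_genInv_Ioc (hτ : 0 < τ) :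
    ∫ p in Ioc 0 τ, genInv μ p = τ * ESminus μ τ := by
  rw [ESminus]
  field_simp

omit [IsProbabilityMeasure μ] in
theorem setIntegral_genInv_Ioo (hτ : τ < 1) :
    ∫ p in Ioo τ 1, genInv μ p = (1 - τ) * ESplus μ τ := by
  rw [ESplus, integral_Ioc_eq_integral_Ioo]
  field_simp [sub_ne_zero.2 hτ.ne']

theorem integrableOn_genInv (hY : Integrable (fun y : ℝ => y) μ) :
    IntegrableOn (genInv μ) (Ioo 0 1) :=
  integrableOn_comp_genInv (μ := μ) hY

theorem integral_eq_ESminus_add_ESplus (hY : Integrable (fun y : ℝ => y) μ) (hτ : τ ∈ Ioo 0 1) :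
    ∫ y, y ∂μ = τ * ESminus μ τ + (1 - τ) * ESplus μ τ := by
  rw [integral_eq_setIntegral_add_setIntegral_genInv hτ hY, setIntegral_genInv_Ioc hτ.1,
    setIntegral_genInv_Ioo hτ.2]

theorem ESminus_mem (h𝒴 : 𝒴.OrdConnected) (hsupp : ∀ᵐ y ∂μ, y ∈ 𝒴)
    (hY : Integrable (fun y : ℝ => y) μ) (hτ : τ ∈ Ioo 0 1) : ESminus μ τ ∈ 𝒴 := by
  have hsub : Ioc 0 τ ⊆ Ioo 0 1 := Ioc_subset_Ioo_right hτ.2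
  have h := h𝒴.setAverage_mem (μ := volume) (f := genInv μ) (by simp [hτ.1]) (by simp)
    ((integrableOn_genInv hY).mono_set hsub)
    (ae_restrict_of_ae_restrict_of_subset hsub (ae_genInv_mem hsupp))
  rwa [setAverage_eq, setIntegral_genInv_Ioc hτ.1, Real.volume_real_Ioc_of_le hτ.1.le, sub_zero,
    smul_eq_mul, inv_mul_cancel_left₀ hτ.1.ne'] at h

theorem ESplus_mem (h𝒴 : 𝒴.OrdConnected) (hsupp : ∀ᵐ y ∂μ, y ∈ 𝒴)
    (hY : Integrable (fun y : ℝ => y) μ) (hτ : τ ∈ Ioo 0 1) : ESplus μ τ ∈ 𝒴 := by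
  have hsub : Ioo τ 1 ⊆ Ioo 0 1 := Ioo_subset_Ioo_left hτ.1.le
  have h := h𝒴.setAverage_mem (μ := volume) (f := genInv μ) (by simp [hτ.2]) (by simp)
    ((integrableOn_genInv hY).mono_set hsub)
    (ae_restrict_of_ae_restrict_of_subset hsub (ae_genInv_mem hsupp))
  rwa [setAverage_eq, setIntegral_genInv_Ioo hτ.2, Real.volume_real_Ioo_of_le hτ.2.le,
    smul_eq_mul, inv_mul_cancel_left₀ (sub_ne_zero.2 hτ.2.ne')] at h

end ExpectedShortfall

/-- The generalized piecewise linear loss; `G = id` gives the usual pinball loss. -/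
noncomputable def pinball (τ : ℝ) (G : ℝ → ℝ) (v y : ℝ) : ℝ :=
  (G y - G v) * (τ - if y ≤ v then 1 else 0)

section Pinball

variable {μ : Measure ℝ} [IsProbabilityMeasure μ] {τ : ℝ} {G : ℝ → ℝ} {v v' : ℝ} {𝒴 : Set ℝ}

theorem integrable_pinball (hG : Integrable G μ) (v : ℝ) : Integrable (pinball τ G v) μ := by
  have hGv : Integrable (fun y => G y - G v) μ := hG.sub (integrable_const _)
  refine ((hGv.const_mul τ).sub (hGv.indicator (measurableSet_Iic (a := v)))).congr
    (Eventually.of_forall fun y => ?_)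
  by_cases hy : y ≤ v <;> simp [pinball, hy, indicator] <;> ring

theorem integral_pinball_sub_of_le (hG : Integrable G μ) (h : v' ≤ v) :
    ∫ y, pinball τ G v y ∂μ - ∫ y, pinball τ G v' y ∂μ
      = ∫ y in Ioc v' v, (G v - G y) ∂μ + (G v - G v') * (μ.real (Iic v') - τ) := by
  have hpt : ∀ y, pinball τ G v y - pinball τ G v' y
      = (Ioc v' v).indicator (fun y => G v - G y) y
        + (G v - G v') * ((Iic v').indicator 1 y - τ) := by
    intro y
    by_cases h₁ : y ≤ v' <;> by_cases h₂ : y ≤ v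
    · simp [pinball, h₁, h₂, indicator, not_lt.2 h₁]; ring
    · exact absurd (h₁.trans h) h₂
    · simp [pinball, h₁, h₂, indicator, not_le.1 h₁]; ring
    · simp [pinball, h₁, h₂, indicator]; ring
  have hF : Integrable (fun y => G v - G y) μ := (integrable_const _).sub hG
  have h1 : Integrable ((Iic v').indicator (1 : ℝ → ℝ)) μ :=
    (integrable_const 1).indicator measurableSet_Iic
  have hI : Integrable (fun y => (Iic v').indicator 1 y - τ) μ := h1.sub (integrable_const τ)
  rw [← integral_sub (integrable_pinball hG v) (integrable_pinball hG v'),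
    integral_congr_ae (Eventually.of_forall hpt),
    integral_add (hF.indicator measurableSet_Ioc) (hI.const_mul _),
    integral_indicator measurableSet_Ioc, integral_const_mul,
    integral_sub h1 (integrable_const τ),
    integral_indicator_one measurableSet_Iic, integral_const, probReal_univ, one_smul]

theorem integral_pinball_sub_of_ge (hG : Integrable G μ) (h : v ≤ v') :
    ∫ y, pinball τ G v y ∂μ - ∫ y, pinball τ G v' y ∂μ
      = ∫ y in Ico v v', (G y - G v) ∂μ + (G v' - G v) * (τ - μ.real (Iio v')) := by
  have hpt : ∀ y, pinball τ G v y - pinball τ G v' y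
      = (Ico v v').indicator (fun y => G y - G v) y
        + (G v' - G v) * (τ - (Iio v').indicator 1 y) := by
    intro y
    simp only [pinball, indicator, mem_Ico, mem_Iio, Pi.one_apply]
    rcases lt_or_ge y v with h₁ | h₁
    · simp [h₁.le, not_le.2 h₁, h₁.trans_le h, (h₁.trans_le h).le]; ring
    rcases lt_or_ge y v' with h₂ | h₂
    · rcases h₁.eq_or_lt with rfl | h₁
      · simp [h₂, h]; ring
      · simp [h₁.le, h₂, h₂.le, not_le.2 h₁]; ring
    · rcases h₂.eq_or_lt with rfl | h₂
      · simpa [h] using h.lt_or_eq.imp_right fun e => by rw [e, sub_self]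
      · simp [not_le.2 h₂, not_le.2 (h.trans_lt h₂), not_lt.2 h₂.le]; ring
  have hF : Integrable (fun y => G y - G v) μ := hG.sub (integrable_const _)
  have h1 : Integrable ((Iio v').indicator (1 : ℝ → ℝ)) μ :=
    (integrable_const 1).indicator measurableSet_Iio
  have hI : Integrable (fun y => τ - (Iio v').indicator 1 y) μ := (integrable_const τ).sub h1
  rw [← integral_sub (integrable_pinball hG v) (integrable_pinball hG v'),
    integral_congr_ae (Eventually.of_forall hpt),
    integral_add (hF.indicator measurableSet_Ico) (hI.const_mul _),
    integral_indicator measurableSet_Ico, integral_const_mul,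
    integral_sub (integrable_const τ) h1,
    integral_indicator_one measurableSet_Iio, integral_const, probReal_univ, one_smul]

theorem integral_pinball_consistent_of_le (hsupp : ∀ᵐ y ∂μ, y ∈ 𝒴) (hGm : StrictMonoOn G 𝒴)
    (hG : Integrable G μ) (hv : v ∈ 𝒴) (hv'𝒴 : v' ∈ 𝒴) (hv' : v' ∈ quantileSet μ τ)
    (h : v' ≤ v) :
    ∫ y, pinball τ G v' y ∂μ ≤ ∫ y, pinball τ G v y ∂μ ∧
      (∫ y, pinball τ G v y ∂μ = ∫ y, pinball τ G v' y ∂μ → v ∈ quantileSet μ τ) := by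
  have hv'F : τ ≤ μ.real (Iic v') := hv'.2
  rw [← sub_nonneg, ← sub_eq_zero, integral_pinball_sub_of_le hG h]
  have hnn : 0 ≤ᵐ[μ.restrict (Ioc v' v)] fun y => G v - G y := by
    filter_upwards [ae_restrict_mem measurableSet_Ioc, ae_restrict_of_ae hsupp] with y hy hy𝒴
    exact sub_nonneg.2 (hGm.monotoneOn hy𝒴 hv hy.2)
  have hT₂ : 0 ≤ (G v - G v') * (μ.real (Iic v') - τ) :=
    mul_nonneg (sub_nonneg.2 (hGm.monotoneOn hv'𝒴 hv h)) (sub_nonneg.2 hv'F)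
  have hT₁ := setIntegral_nonneg_of_ae_restrict hnn
  refine ⟨add_nonneg hT₁ hT₂, fun h0 => ?_⟩
  rcases h.eq_or_lt with rfl | hlt
  · exact hv'
  have hF : μ.real (Iic v') = τ := by
    have := (mul_eq_zero.1 (by linarith : (G v - G v') * (μ.real (Iic v') - τ) = 0)).resolve_left
      (sub_ne_zero.2 (hGm hv'𝒴 hv hlt).ne')
    linarith
  have hnull : μ (Ioo v' v) = 0 := by
    refine measure_eq_zero_of_setIntegral_eq_zero (f := fun y => G v - G y) Ioo_subset_Ioc_self
      ((integrable_const _).sub hG).integrableOn hnn ?_ (by linarith)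
    filter_upwards [ae_restrict_mem measurableSet_Ioo, ae_restrict_of_ae hsupp] with y hy hy𝒴
    exact sub_pos.2 (hGm hy𝒴 hv hy.2)
  refine ⟨?_, hv'F.trans (measureReal_mono (Iic_subset_Iic.2 h))⟩
  calc μ.real (Iio v) = μ.real (Iic v' ∪ Ioo v' v) := by rw [Iic_union_Ioo_eq_Iio hlt]
    _ ≤ μ.real (Iic v') + μ.real (Ioo v' v) := measureReal_union_le _ _
    _ = τ := by rw [hF, measureReal_def, hnull, ENNReal.toReal_zero, add_zero]

theorem integral_pinball_consistent_of_ge (hsupp : ∀ᵐ y ∂μ, y ∈ 𝒴) (hGm : StrictMonoOn G 𝒴)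
    (hG : Integrable G μ) (hv : v ∈ 𝒴) (hv'𝒴 : v' ∈ 𝒴) (hv' : v' ∈ quantileSet μ τ)
    (h : v ≤ v') :
    ∫ y, pinball τ G v' y ∂μ ≤ ∫ y, pinball τ G v y ∂μ ∧
      (∫ y, pinball τ G v y ∂μ = ∫ y, pinball τ G v' y ∂μ → v ∈ quantileSet μ τ) := by
  have hv'F : μ.real (Iio v') ≤ τ := hv'.1
  rw [← sub_nonneg, ← sub_eq_zero, integral_pinball_sub_of_ge hG h]
  have hnn : 0 ≤ᵐ[μ.restrict (Ico v v')] fun y => G y - G v := by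
    filter_upwards [ae_restrict_mem measurableSet_Ico, ae_restrict_of_ae hsupp] with y hy hy𝒴
    exact sub_nonneg.2 (hGm.monotoneOn hv hy𝒴 hy.1)
  have hT₂ : 0 ≤ (G v' - G v) * (τ - μ.real (Iio v')) :=
    mul_nonneg (sub_nonneg.2 (hGm.monotoneOn hv hv'𝒴 h)) (sub_nonneg.2 hv'F)
  have hT₁ := setIntegral_nonneg_of_ae_restrict hnn
  refine ⟨add_nonneg hT₁ hT₂, fun h0 => ?_⟩
  rcases h.eq_or_lt with rfl | hlt
  · exact hv'
  have hF : μ.real (Iio v') = τ := by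
    have := (mul_eq_zero.1 (by linarith : (G v' - G v) * (τ - μ.real (Iio v')) = 0)).resolve_left
      (sub_ne_zero.2 (hGm hv hv'𝒴 hlt).ne')
    linarith
  have hnull : μ (Ioo v v') = 0 := by
    refine measure_eq_zero_of_setIntegral_eq_zero (f := fun y => G y - G v) Ioo_subset_Ico_self
      (hG.sub (integrable_const _)).integrableOn hnn ?_ (by linarith)
    filter_upwards [ae_restrict_mem measurableSet_Ioo, ae_restrict_of_ae hsupp] with y hy hy𝒴
    exact sub_pos.2 (hGm hv hy𝒴 hy.1)
  refine ⟨(measureReal_mono (Iio_subset_Iio h)).trans hv'F, ?_⟩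
  calc τ = μ.real (Iic v ∪ Ioo v v') := by rw [Iic_union_Ioo_eq_Iio hlt, hF]
    _ ≤ μ.real (Iic v) + μ.real (Ioo v v') := measureReal_union_le _ _
    _ = μ.real (Iic v) := by
      rw [measureReal_def (s := Ioo v v'), hnull, ENNReal.toReal_zero, add_zero]

theorem integral_pinball_strictly_consistent (h𝒴 : 𝒴.OrdConnected) (hsupp : ∀ᵐ y ∂μ, y ∈ 𝒴)
    (hGm : StrictMonoOn G 𝒴) (hG : Integrable G μ) (hτ : τ ∈ Ioo 0 1) (hv : v ∈ 𝒴)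
    (hv' : v' ∈ quantileSet μ τ) :
    ∫ y, pinball τ G v' y ∂μ ≤ ∫ y, pinball τ G v y ∂μ ∧
      (∫ y, pinball τ G v y ∂μ = ∫ y, pinball τ G v' y ∂μ → v ∈ quantileSet μ τ) := by
  have hv'𝒴 := mem_of_mem_quantileSet h𝒴 hsupp hτ hv'
  rcases le_total v' v with h | h
  · exact integral_pinball_consistent_of_le hsupp hGm hG hv hv'𝒴 hv' h
  · exact integral_pinball_consistent_of_ge hsupp hGm hG hv hv'𝒴 hv' h

theorem integral_pinball_id_of_mem_quantileSet (hY : Integrable (fun y : ℝ => y) μ)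
    (hτ : τ ∈ Ioo 0 1) (hv : v ∈ quantileSet μ τ) :
    ∫ y, pinball τ (fun x => x) v y ∂μ = τ * (1 - τ) * (ESplus μ τ - ESminus μ τ) := by
  have h₁ : ∫ p in Ioc 0 τ, pinball τ (fun x => x) v (genInv μ p)
      = ∫ p in Ioc 0 τ, (τ - 1) * (genInv μ p - v) :=
    setIntegral_congr_fun measurableSet_Ioc fun p hp => by
      simp [pinball, genInv_le_of_mem_quantileSet hv hτ.2 hp, mul_comm]
  have h₂ : ∫ p in Ioo τ 1, pinball τ (fun x => x) v (genInv μ p)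
      = ∫ p in Ioo τ 1, τ * (genInv μ p - v) :=
    setIntegral_congr_fun measurableSet_Ioo fun p hp => by
      rcases (le_genInv_of_mem_quantileSet hv hτ.1 hp).eq_or_lt with h | h
      · simp [pinball, ← h]
      · simp [pinball, not_le.2 h, mul_comm]
  have hI := integrableOn_genInv (μ := μ) hY
  rw [integral_eq_setIntegral_add_setIntegral_genInv hτ (integrable_pinball hY v), h₁, h₂,
    integral_const_mul, integral_const_mul,
    integral_sub (hI.mono_set (Ioc_subset_Ioo_right hτ.2)) (integrableOn_const (by simp)),
    integral_sub (hI.mono_set (Ioo_subset_Ioo_left hτ.1.le)) (integrableOn_const (by simp)),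
    setIntegral_genInv_Ioc hτ.1, setIntegral_genInv_Ioo hτ.2, setIntegral_const, setIntegral_const,
    Real.volume_real_Ioc_of_le hτ.1.le, Real.volume_real_Ioo_of_le hτ.2.le, smul_eq_mul,
    smul_eq_mul]
  ring

end Pinball

section Score

variable {τ : ℝ} {g : ℝ → ℝ} {Φ Φ₁ Φ₂ : ℝ → ℝ → ℝ}

theorem compositeScore_eq_pinball_add (hτ₀ : τ ≠ 0) (hτ₁ : 1 - τ ≠ 0) (y em v ep : ℝ) :
    compositeScore g Φ Φ₁ Φ₂ τ y em v ep
      = pinball τ (fun x => g x + 1/τ * Φ₁ em ep * x - 1/(1-τ) * Φ₂ em ep * x) v y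
        + (Φ₁ em ep * (em - y) + Φ₂ em ep * (ep - y) - Φ em ep + Φ y y) := by
  by_cases h : y ≤ v
  · simp only [compositeScore, Sminus, Splus, pinball, if_pos h, if_neg (not_lt.2 h)]
    field_simp
    ring
  · simp only [compositeScore, Sminus, Splus, pinball, if_neg h, if_pos (not_le.1 h)]
    field_simp
    ring

variable {μ : Measure ℝ} [IsProbabilityMeasure μ]

theorem integral_compositeScore (hτ₀ : τ ≠ 0) (hτ₁ : 1 - τ ≠ 0)
    (hY : Integrable (fun y : ℝ => y) μ) (hg : Integrable g μ)
    (hΦ : Integrable (fun y => Φ y y) μ) (em v ep : ℝ) :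
    ∫ y, compositeScore g Φ Φ₁ Φ₂ τ y em v ep ∂μ
      = ∫ y, pinball τ (fun x => g x + 1/τ * Φ₁ em ep * x - 1/(1-τ) * Φ₂ em ep * x) v y ∂μ
        + (Φ₁ em ep * (em - ∫ y, y ∂μ) + Φ₂ em ep * (ep - ∫ y, y ∂μ) - Φ em ep
          + ∫ y, Φ y y ∂μ) := by
  have hG : Integrable (fun x => g x + 1/τ * Φ₁ em ep * x - 1/(1-τ) * Φ₂ em ep * x) μ :=
    (hg.add (hY.const_mul _)).sub (hY.const_mul _)
  have h₁ : Integrable (fun y => Φ₁ em ep * (em - y)) μ :=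
    ((integrable_const em).sub hY).const_mul _
  have h₂ : Integrable (fun y => Φ₂ em ep * (ep - y)) μ :=
    ((integrable_const ep).sub hY).const_mul _
  have h₁₂ : Integrable (fun y => Φ₁ em ep * (em - y) + Φ₂ em ep * (ep - y)) μ := h₁.add h₂
  have h₃ : Integrable (fun y => Φ₁ em ep * (em - y) + Φ₂ em ep * (ep - y) - Φ em ep) μ :=
    h₁₂.sub (integrable_const _)
  have h₄ : Integrable
      (fun y => Φ₁ em ep * (em - y) + Φ₂ em ep * (ep - y) - Φ em ep + Φ y y) μ := h₃.add hΦ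
  simp_rw [compositeScore_eq_pinball_add hτ₀ hτ₁]
  rw [integral_add (integrable_pinball hG v) h₄, integral_add h₃ hΦ,
    integral_sub h₁₂ (integrable_const _), integral_add h₁ h₂, integral_const_mul,
    integral_const_mul, integral_sub (integrable_const _) hY, integral_sub (integrable_const _) hY]
  simp

theorem integral_compositeScore_of_mem_quantileSet (hτ : τ ∈ Ioo 0 1)
    (hY : Integrable (fun y : ℝ => y) μ) (hg : Integrable g μ)
    (hΦ : Integrable (fun y => Φ y y) μ) {v : ℝ} (hv : v ∈ quantileSet μ τ) (em ep : ℝ) :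
    ∫ y, compositeScore g Φ Φ₁ Φ₂ τ y em v ep ∂μ
      = ∫ y, pinball τ g v y ∂μ + (Φ₁ em ep * (em - ESminus μ τ)
        + Φ₂ em ep * (ep - ESplus μ τ) - Φ em ep + ∫ y, Φ y y ∂μ) := by
  have hτ₀ : τ ≠ 0 := hτ.1.ne'
  have hτ₁ : 1 - τ ≠ 0 := sub_ne_zero.2 hτ.2.ne'
  have hsplit : ∫ y, pinball τ (fun x => g x + 1/τ * Φ₁ em ep * x - 1/(1-τ) * Φ₂ em ep * x) v y ∂μ
      = ∫ y, pinball τ g v y ∂μ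
        + (1/τ * Φ₁ em ep - 1/(1-τ) * Φ₂ em ep) * ∫ y, pinball τ (fun x => x) v y ∂μ := by
    rw [← integral_const_mul,
      ← integral_add (integrable_pinball hg v) ((integrable_pinball hY v).const_mul _)]
    congr 1 with y
    simp only [pinball]
    ring
  rw [integral_compositeScore hτ₀ hτ₁ hY hg hΦ, hsplit,
    integral_pinball_id_of_mem_quantileSet hY hτ hv, integral_eq_ESminus_add_ESplus hY hτ]
  field_simp
  ring

theorem integral_compositeScore_ES_strictly_consistent {𝒴 : Set ℝ} (h𝒴 : 𝒴.OrdConnected)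
    (hsupp : ∀ᵐ y ∂μ, y ∈ 𝒴) (hτ : τ ∈ Ioo 0 1) (hY : Integrable (fun y : ℝ => y) μ)
    (hg : Integrable g μ) (hΦ : Integrable (fun y => Φ y y) μ)
    (hΦstrict : ∀ a ∈ 𝒴, ∀ b ∈ 𝒴, ∀ c ∈ 𝒴, ∀ d ∈ 𝒴, (a, b) ≠ (c, d) →
      Φ a b + Φ₁ a b * (c - a) + Φ₂ a b * (d - b) < Φ c d)
    {v em ep : ℝ} (hv : v ∈ quantileSet μ τ) (hem : em ∈ 𝒴) (hep : ep ∈ 𝒴) :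
    ∫ y, compositeScore g Φ Φ₁ Φ₂ τ y (ESminus μ τ) v (ESplus μ τ) ∂μ
        ≤ ∫ y, compositeScore g Φ Φ₁ Φ₂ τ y em v ep ∂μ ∧
      (∫ y, compositeScore g Φ Φ₁ Φ₂ τ y em v ep ∂μ
          = ∫ y, compositeScore g Φ Φ₁ Φ₂ τ y (ESminus μ τ) v (ESplus μ τ) ∂μ →
        em = ESminus μ τ ∧ ep = ESplus μ τ) := by
  simp only [integral_compositeScore_of_mem_quantileSet hτ hY hg hΦ hv, sub_self]
  rcases eq_or_ne (em, ep) (ESminus μ τ, ESplus μ τ) with h | h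
  · obtain ⟨rfl, rfl⟩ := Prod.mk.inj h
    simp
  · have := hΦstrict em hem ep hep _ (ESminus_mem h𝒴 hsupp hY hτ) _ (ESplus_mem h𝒴 hsupp hY hτ) h
    exact ⟨by linarith, fun h' => by linarith⟩

theorem integral_compositeScore_quantile_strictly_consistent {𝒴 : Set ℝ}
    (h𝒴 : 𝒴.OrdConnected) (hsupp : ∀ᵐ y ∂μ, y ∈ 𝒴) (hτ : τ ∈ Ioo 0 1)
    (hY : Integrable (fun y : ℝ => y) μ) (hg : Integrable g μ)
    (hΦ : Integrable (fun y => Φ y y) μ) {em ep : ℝ}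
    (hG : StrictMonoOn (fun x => g x + 1/τ * Φ₁ em ep * x - 1/(1-τ) * Φ₂ em ep * x) 𝒴)
    {v v' : ℝ} (hv : v ∈ 𝒴) (hv' : v' ∈ quantileSet μ τ) :
    ∫ y, compositeScore g Φ Φ₁ Φ₂ τ y em v' ep ∂μ
        ≤ ∫ y, compositeScore g Φ Φ₁ Φ₂ τ y em v ep ∂μ ∧
      (∫ y, compositeScore g Φ Φ₁ Φ₂ τ y em v ep ∂μ
          = ∫ y, compositeScore g Φ Φ₁ Φ₂ τ y em v' ep ∂μ → v ∈ quantileSet μ τ) := by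
  simp only [integral_compositeScore hτ.1.ne' (sub_ne_zero.2 hτ.2.ne') hY hg hΦ,
    add_le_add_iff_right, add_left_inj]
  exact integral_pinball_strictly_consistent h𝒴 hsupp hG
    ((hg.add (hY.const_mul _)).sub (hY.const_mul _)) hτ hv hv'

end Score

theorem compositeScore_strictly_consistent
    (τ : ℝ) (hτ : τ ∈ Set.Ioo (0:ℝ) 1)
    (𝒴 : Set ℝ) (h𝒴 : Convex ℝ 𝒴)
    (μ : Measure ℝ) [IsProbabilityMeasure μ]
    (hsupp : ∀ᵐ y ∂μ, y ∈ 𝒴)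
    (hY : Integrable (fun y : ℝ => y) μ)
    (g : ℝ → ℝ) (Φ Φ₁ Φ₂ : ℝ → ℝ → ℝ)
    (hΦstrict : ∀ a ∈ 𝒴, ∀ b ∈ 𝒴, ∀ c ∈ 𝒴, ∀ d ∈ 𝒴, (a, b) ≠ (c, d) →
      Φ a b + Φ₁ a b * (c - a) + Φ₂ a b * (d - b) < Φ c d)
    (hG : ∀ em ∈ 𝒴, ∀ ep ∈ 𝒴, StrictMonoOn
      (fun v => g v + (1/τ) * Φ₁ em ep * v - (1/(1-τ)) * Φ₂ em ep * v) 𝒴)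
    (hg : Integrable (fun y => g y) μ)
    (hΦ : Integrable (fun y => Φ y y) μ) :
    (∀ v' ∈ quantileSet μ τ, ∀ em ∈ 𝒴, ∀ v ∈ 𝒴, ∀ ep ∈ 𝒴,
      ∫ y, compositeScore g Φ Φ₁ Φ₂ τ y (ESminus μ τ) v' (ESplus μ τ) ∂μ ≤
        ∫ y, compositeScore g Φ Φ₁ Φ₂ τ y em v ep ∂μ) ∧
    (∀ v' ∈ quantileSet μ τ, ∀ em ∈ 𝒴, ∀ v ∈ 𝒴, ∀ ep ∈ 𝒴,
      ∫ y, compositeScore g Φ Φ₁ Φ₂ τ y em v ep ∂μ =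
        ∫ y, compositeScore g Φ Φ₁ Φ₂ τ y (ESminus μ τ) v' (ESplus μ τ) ∂μ →
      em = ESminus μ τ ∧ v ∈ quantileSet μ τ ∧ ep = ESplus μ τ) := by
  have hES := fun v' (hv' : v' ∈ quantileSet μ τ) em (hem : em ∈ 𝒴) ep (hep : ep ∈ 𝒴) =>
    integral_compositeScore_ES_strictly_consistent h𝒴.ordConnected hsupp hτ hY hg hΦ hΦstrict
      hv' hem hep
  have hq := fun v' (hv' : v' ∈ quantileSet μ τ) em (hem : em ∈ 𝒴) v (hv : v ∈ 𝒴) ep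
      (hep : ep ∈ 𝒴) =>
    integral_compositeScore_quantile_strictly_consistent h𝒴.ordConnected hsupp hτ hY hg hΦ
      (hG em hem ep hep) hv hv'
  refine ⟨fun v' hv' em hem v hv ep hep =>
    (hES v' hv' em hem ep hep).1.trans (hq v' hv' em hem v hv ep hep).1,
    fun v' hv' em hem v hv ep hep heq => ?_⟩
  obtain ⟨hESle, hESeq⟩ := hES v' hv' em hem ep hep
  obtain ⟨hqle, hqeq⟩ := hq v' hv' em hem v hv ep hep
  obtain ⟨rfl, rfl⟩ := hESeq (by linarith)
  exact ⟨rfl, hqeq (by linarith), rfl⟩
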